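/- arXiv:2106.12453 — 3 statements merged into one kernel-verified Lean document; each statement's English description precedes it below -/
import Mathlib

section
/- Let M be a matroid on a finite ground set E and let B and B' be bases of M. Then there exists a bijection σ from B to B' such that for every element e ∈ B, the set (B \ {e}) ∪ {σ(e)} is a basis of M. -/
/-!
Apply Hall's theorem to the relation `e ~ f` iff `insert f (B \ {e})` is a base, which for
`f ∈ M.E` means `f ∉ cl (B \ {e})`. For `X ⊆ B` the independence of `B` gives
`cl (B \ X) = ⋂ e ∈ X, cl (B \ {e})`, so every `f ∈ B' \ cl (B \ X)` is related to some `e ∈ X`;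
and `B' ∩ cl (B \ X)` is independent inside a flat of rank `|B| - |X|`, so `B' \ cl (B \ X)` has
at least `|X|` elements. The resulting matching `B → B'` is injective between sets of the same
finite size, hence bijective.
-/

open Set

namespace Matroid

variable {α : Type*} {M : Matroid α} {B B' I X : Set α} {f : α}

lemma Indep.closure_sdiff_eq_biInter_closure_sdiff_singleton (hI : M.Indep I) (hX : X.Nonempty) :
    M.closure (I \ X) = ⋂ e ∈ X, M.closure (I \ {e}) := by
  have := hX.to_subtype
  rw [biInter_eq_iInter, ← hI.closure_iInter_eq_biInter_closure_of_forall_subset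
    (fun _ ↦ sdiff_subset), ← sdiff_iUnion, iUnion_singleton_eq_range, Subtype.range_coe]

lemma IsBase.exists_isBase_insert_of_notMem_closure_sdiff (hB : M.IsBase B) (hXB : X ⊆ B)
    (hfE : f ∈ M.E) (hf : f ∉ M.closure (B \ X)) : ∃ e ∈ X, M.IsBase (insert f (B \ {e})) := by
  obtain rfl | hX := X.eq_empty_or_nonempty
  · rw [sdiff_empty, hB.closure_eq] at hf
    exact absurd hfE hf
  rw [hB.indep.closure_sdiff_eq_biInter_closure_sdiff_singleton hX, mem_iInter₂] at hf
  push Not at hf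
  obtain ⟨e, heX, he⟩ := hf
  exact ⟨e, heX, hB.exchange_base_of_notMem_closure (hXB heX) he⟩

lemma IsBase.encard_le_encard_sdiff_closure_sdiff (hB : M.IsBase B) (hB' : M.IsBase B')
    (hBfin : B.Finite) (hXB : X ⊆ B) : X.encard ≤ (B' \ M.closure (B \ X)).encard := by
  have hspan : (B' ∩ M.closure (B \ X)).encard ≤ (B \ X).encard := by
    rw [← (hB.indep.subset sdiff_subset).eRk_eq_encard, ← eRk_closure_eq]
    exact (hB'.indep.subset inter_subset_left).encard_le_eRk_of_subset inter_subset_right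
  have hcard : B'.encard = B.encard := hB'.encard_eq_encard_of_isBase hB
  rw [← encard_sdiff_add_encard_inter B' (M.closure (B \ X)),
    ← encard_sdiff_add_encard_of_subset hXB] at hcard
  have hfin : (B \ X).encard ≠ ⊤ := (hBfin.subset sdiff_subset).encard_lt_top.ne
  rw [← ENat.add_le_add_iff_left hfin, ← hcard, add_comm (B \ X).encard]
  gcongr

lemma IsBase.encard_le_encard_setOf_isBase_insert (hB : M.IsBase B) (hB' : M.IsBase B')
    (hBfin : B.Finite) (hXB : X ⊆ B) :
    X.encard ≤ {f ∈ B' | ∃ e ∈ X, M.IsBase (insert f (B \ {e}))}.encard :=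
  (hB.encard_le_encard_sdiff_closure_sdiff hB' hBfin hXB).trans <| encard_le_encard fun _ hf ↦
    ⟨hf.1, hB.exists_isBase_insert_of_notMem_closure_sdiff hXB (hB'.subset_ground hf.1) hf.2⟩

end Matroid

/-- **Bijective basis exchange.** For any two bases `B, B'` of a matroid `M` on a finite
ground set, there is a bijection `σ : B → B'` such that for every `e ∈ B`,
`(B \ {e}) ∪ {σ(e)}` is again a basis of `M`. -/
theorem bijective_basis_exchange {α : Type*} (M : Matroid α) (hE : M.E.Finite)
    (B B' : Set α) (hB : M.IsBase B) (hB' : M.IsBase B') :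
    ∃ σ : B → B', Function.Bijective σ ∧
      ∀ e : B, M.IsBase (insert ((σ e : α)) (B \ {(e : α)})) := by
  classical
  have := (hE.subset hB'.subset_ground).fintype
  have hall : ∀ A : Finset B, A.card ≤ (Finset.univ.filter
      fun f : B' ↦ ∃ e ∈ A, M.IsBase (insert (f : α) (B \ {(e : α)}))).card := by
    intro A
    have hA := hB.encard_le_encard_setOf_isBase_insert hB' (hE.subset hB.subset_ground)
      (Subtype.coe_image_subset B A)
    rw [Subtype.val_injective.encard_image, encard_coe_eq_coe_finsetCard] at hA
    refine Nat.cast_le.1 (hA.trans_eq ?_)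
    rw [← encard_coe_eq_coe_finsetCard, ← Subtype.val_injective.encard_image]
    congr 1
    ext f
    simp [and_comm]
  obtain ⟨σ, hσ, hσB⟩ := (Fintype.all_card_le_filter_rel_iff_exists_injective _).1 hall
  refine ⟨σ, hσ.bijective_of_nat_card_le ?_, hσB⟩
  rw [Nat.card_coe_set_eq, Nat.card_coe_set_eq, hB'.ncard_eq_ncard_of_isBase hB]
end

section
/- Let M be a matroid on a finite ground set E, let F ⊆ E, and let B and B' be bases of M. Let σ be a bijection from B to B' such that for every e ∈ B the set (B \ {e}) ∪ {σ(e)} is a basis of M. Assume |B ∩ F| = rk(F). Then rk(F) − |B' ∩ F| = |{e ∈ B : e ∈ F and σ(e) ∉ F}|. -/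
/-!
Since `B ∩ F` is an independent subset of `F` of maximum size, an exchange `B - e + σ(e)` can
move `σ(e)` into `F` only if `e` was already in `F`: otherwise `(B ∩ F) + σ(e)` would be an
independent subset of `F` with more than `rk(F)` elements. Hence `{e ∈ B : σ(e) ∈ F}` is contained
in `{e ∈ B : e ∈ F}`; by bijectivity of `σ` these sets have `|B' ∩ F|` and `|B ∩ F| = rk(F)`
elements, and their difference is the set counted on the right.
-/

/-- The rank of a subset `F` in a matroid `M`: the largest cardinality of an
independent set contained in `F`. -/
noncomputable def matroidRk {α : Type*} (M : Matroid α) (F : Set α) : ℕ :=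
  sSup {n : ℕ | ∃ I : Set α, M.Indep I ∧ I ⊆ F ∧ I.ncard = n}

open Set

namespace Matroid

variable {α : Type*} {M : Matroid α} {B F I : Set α} {e f : α}

lemma Indep.ncard_le_matroidRk [M.RankFinite] (hI : M.Indep I) (hIF : I ⊆ F) :
    I.ncard ≤ matroidRk M F := by
  obtain ⟨B, hB⟩ := M.exists_isBase
  refine le_csSup ⟨B.ncard, ?_⟩ ⟨I, hI, hIF, rfl⟩
  rintro _ ⟨J, hJ, -, rfl⟩
  obtain ⟨B', hB', hJB'⟩ := hJ.exists_isBase_superset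
  exact (ncard_le_ncard hJB' hB'.finite).trans (hB'.ncard_eq_ncard_of_isBase hB).le

lemma IsBase.notMem_of_isBase_insert_sdiff_singleton (hB : M.IsBase B) (he : e ∈ B) (hfe : f ≠ e)
    (hexch : M.IsBase (insert f (B \ {e}))) : f ∉ B := by
  intro hfB
  have hsub : insert f (B \ {e}) ⊆ B := insert_subset hfB sdiff_subset
  have heB : e ∈ insert f (B \ {e}) := (hexch.eq_of_subset_isBase hB hsub).symm ▸ he
  simp [hfe.symm] at heB

lemma IsBase.mem_of_isBase_insert_sdiff_singleton [M.RankFinite] (hB : M.IsBase B)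
    (hBF : (B ∩ F).ncard = matroidRk M F) (he : e ∈ B) (hexch : M.IsBase (insert f (B \ {e})))
    (hfF : f ∈ F) : e ∈ F := by
  by_contra heF
  have hfB : f ∉ B :=
    hB.notMem_of_isBase_insert_sdiff_singleton he (by rintro rfl; exact heF hfF) hexch
  have hsub : insert f (B ∩ F) ⊆ insert f (B \ {e}) :=
    insert_subset_insert fun x ⟨hxB, hxF⟩ ↦ ⟨hxB, by rintro rfl; exact heF hxF⟩
  have hle := (hexch.indep.subset hsub).ncard_le_matroidRk (insert_subset hfF inter_subset_right)
  rw [ncard_insert_of_notMem (fun h ↦ hfB h.1) (hB.finite.subset inter_subset_left), hBF] at hle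
  omega

end Matroid

theorem slack_eq_card_exchange_general {α : Type*} (M : Matroid α) (hE : M.E.Finite)
    (F : Set α) (B B' : Set α) (hB : M.IsBase B)
    (σ : B → B') (hσ : Function.Bijective σ)
    (hexch : ∀ e : B, M.IsBase (insert ((σ e : α)) (B \ {(e : α)})))
    (hBF : (B ∩ F).ncard = matroidRk M F) :
    matroidRk M F - (B' ∩ F).ncard
      = {e : B | (e : α) ∈ F ∧ (σ e : α) ∉ F}.ncard := by
  have : M.Finite := ⟨hE⟩
  have : Finite B := hB.finite.to_subtype
  have hmem (e : B) (he : (σ e : α) ∈ F) : (e : α) ∈ F :=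
    hB.mem_of_isBase_insert_sdiff_singleton hBF e.2 (hexch e) he
  have hcardB : (B ∩ F).ncard = {e : B | (e : α) ∈ F}.ncard := by
    rw [ncard_subtype, inter_comm]; rfl
  have hcardB' : (B' ∩ F).ncard = {e : B | (σ e : α) ∈ F}.ncard := by
    change _ = (σ ⁻¹' {e' : B' | (e' : α) ∈ F}).ncard
    rw [ncard_preimage_of_injective_subset_range hσ.1 (by simp [hσ.2.range_eq]), ncard_subtype,
      inter_comm]; rfl
  rw [← hBF, hcardB, hcardB']
  exact (ncard_sdiff (t := {e : B | (e : α) ∈ F}) hmem).symm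

/-- **Lemma 3.** Let `B, B'` be bases of `M`, let `σ : B → B'` be a bijection such that
`(B \ {e}) ∪ {σ(e)}` is a basis for every `e ∈ B`, and assume `|B ∩ F| = rk(F)`. Then
`rk(F) − |B' ∩ F| = |{e ∈ B : e ∈ F and σ(e) ∉ F}|`. -/
theorem slack_eq_card_exchange {α : Type*} (M : Matroid α) (hE : M.E.Finite)
    (F : Set α) (hF : F ⊆ M.E) (B B' : Set α) (hB : M.IsBase B) (hB' : M.IsBase B')
    (σ : B → B') (hσ : Function.Bijective σ)
    (hexch : ∀ e : B, M.IsBase (insert ((σ e : α)) (B \ {(e : α)})))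
    (hBF : (B ∩ F).ncard = matroidRk M F) :
    matroidRk M F - (B' ∩ F).ncard
      = {e : B | (e : α) ∈ F ∧ (σ e : α) ∉ F}.ncard :=
  slack_eq_card_exchange_general M hE F B B' hB σ hσ hexch hBF
end

section
/- Let n ≥ 2 and fix a vertex v₀ of the complete graph K_n. Then the family of n − 1 spanning trees {δ(u) : u ∈ V(K_n), u ≠ v₀} has the following property: for every subset U of V(K_n) with |U| ≥ 2, there exists u ∈ U with u ≠ v₀ such that |δ(u) ∩ E(U)| = |U| − 1. -/
namespace SimpleGraph

variable {V : Type*} {U : Set V} {u : V}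

theorem incidenceSet_top_inter_edgesWithin_eq_image (hu : u ∈ U) :
    (⊤ : SimpleGraph V).incidenceSet u ∩ {e ∈ (⊤ : SimpleGraph V).edgeSet | ∀ v ∈ e, v ∈ U} =
      (fun w => s(u, w)) '' (U \ {u}) := by
  ext e
  constructor
  · rintro ⟨⟨hadj, hue⟩, -, hwithin⟩
    obtain ⟨w, rfl⟩ := Sym2.mem_iff_exists.mp hue
    have hwu : w ≠ u := fun hwu => ((mem_edgeSet _).mp hadj).ne hwu.symm
    exact ⟨w, ⟨hwithin w (Sym2.mem_mk_right u w), hwu⟩, rfl⟩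
  · rintro ⟨w, ⟨hw, hwu⟩, rfl⟩
    have hadj : (⊤ : SimpleGraph V).Adj u w := fun huw => hwu huw.symm
    refine ⟨⟨hadj, Sym2.mem_mk_left u w⟩, hadj, fun v hv => ?_⟩
    rcases Sym2.mem_iff.mp hv with rfl | rfl
    exacts [hu, hw]

theorem ncard_incidenceSet_top_inter_edgesWithin (hu : u ∈ U) :
    ((⊤ : SimpleGraph V).incidenceSet u ∩
        {e ∈ (⊤ : SimpleGraph V).edgeSet | ∀ v ∈ e, v ∈ U}).ncard = U.ncard - 1 := by
  rw [incidenceSet_top_inter_edgesWithin_eq_image hu,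
    Set.ncard_image_of_injective _ fun _ _ => Sym2.congr_right.mp,
    Set.ncard_sdiff_singleton_of_mem hu]

end SimpleGraph

theorem stars_hitting_family_general (n : ℕ) (v₀ : Fin n)
    (U : Set (Fin n)) (hU : 2 ≤ U.ncard) :
    ∃ u ∈ U, u ≠ v₀ ∧
      ((⊤ : SimpleGraph (Fin n)).incidenceSet u ∩
          {e ∈ (⊤ : SimpleGraph (Fin n)).edgeSet | ∀ v ∈ e, v ∈ U}).ncard
        = U.ncard - 1 := by
  obtain ⟨u, hu, hu₀⟩ := Set.exists_ne_of_one_lt_ncard hU v₀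
  exact ⟨u, hu, hu₀, SimpleGraph.ncard_incidenceSet_top_inter_edgesWithin hu⟩

/-- **Hitting family of stars.** Fix `n ≥ 2` and a vertex `v₀` of `K_n`. The family of
`n − 1` spanning trees `{δ(u) : u ≠ v₀}` hits every facet: for every vertex subset `U`
with `|U| ≥ 2` there is `u ∈ U`, `u ≠ v₀`, whose star meets the set `E(U)` of edges
with both endpoints in `U` in exactly `|U| − 1` edges. -/
theorem stars_hitting_family (n : ℕ) (hn : 2 ≤ n) (v₀ : Fin n)
    (U : Set (Fin n)) (hU : 2 ≤ U.ncard) :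
    ∃ u ∈ U, u ≠ v₀ ∧
      ((⊤ : SimpleGraph (Fin n)).incidenceSet u ∩
          {e ∈ (⊤ : SimpleGraph (Fin n)).edgeSet | ∀ v ∈ e, v ∈ U}).ncard
        = U.ncard - 1 :=
  stars_hitting_family_general n v₀ U hU
end
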